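/- Let there be N players with strategy sets X_i ⊆ ℝ^{m_i}, continuously differentiable objective functions J_i : ℝ^m → ℝ, and parameterized conjecture maps γ_i^j(·;θ_{i,j}) : X_i → ℝ^{m_j}, θ_{i,j} ∈ Θ_{i,j}, each differentiable in x_i. Assume the conjecture class is expressive: for all i ≠ j, all x_i ∈ X_i, all x_j ∈ X_j, and every matrix α ∈ ℝ^{m_j × m_i}, there exists θ_{i,j} ∈ Θ_{i,j} with γ_i^j(x_i; θ_{i,j}) = x_j and ∇_{x_i} γ_i^j(x_i; θ_{i,j}) = α. Assume further there is a point x̂ ∈ ∏_i X_i such that for every player i the partial gradient ∇_{x_{-i}} J_i(x̂) is nonzero. Then the feasible set is nonempty: there exists θ = (θ_{i,j})_{i≠j} such that for every i, γ_i^j(x̂_i; θ_{i,j}) = x̂_j for all j ≠ i, and the total derivative of x_i ↦ J_i(x_i, γ_i^{-i}(x_i;θ_i)) vanishes at x̂_i, i.e., ∇_{x_i} J_i(x̂) + (∇_{x_i} γ_i^{-i}(x̂_i;θ_i))ᵀ ∇_{x_{-i}} J_i(x̂) = 0. -/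

import Mathlib

/-!
Fix a player `i` and an opponent `j*` whose partial gradient `∂_{j*} J_i(x̂)` is nonzero.
Since `∂_{j*} J_i(x̂)` is onto `ℝ`, some Jacobian `A` satisfies `∂_{j*} J_i(x̂) ∘ A = -∂_i J_i(x̂)`.
By expressivity, choose the conjectures consistent at `x̂`, with Jacobian `A` towards `j*` and `0`
towards every other opponent. The chain rule then gives the total derivative
`∂_i J_i(x̂) + ∂_{j*} J_i(x̂) ∘ A = 0`.
-/

/-- The profile conjectured by player `i` when it plays `y`: coordinate `i` is `y` itself
and coordinate `j ≠ i` is the conjectured strategy `γ i j y (θ i j)` of player `j`. -/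
noncomputable def conjProfile {N d : ℕ} {m : Fin N → ℕ}
    (γ : (i j : Fin N) → EuclideanSpace ℝ (Fin (m i)) → EuclideanSpace ℝ (Fin d) →
      EuclideanSpace ℝ (Fin (m j)))
    (θ : (i j : Fin N) → EuclideanSpace ℝ (Fin d)) (i : Fin N)
    (y : EuclideanSpace ℝ (Fin (m i))) : (k : Fin N) → EuclideanSpace ℝ (Fin (m k)) :=
  Function.update
    (fun j : Fin N =>
      if _h : j = i then (0 : EuclideanSpace ℝ (Fin (m j)))
      else γ i j y (θ i j)) i y

open Function

section Calculus

variable {𝕜 ι E F : Type*} [NontriviallyNormedField 𝕜] [Fintype ι] [DecidableEq ι]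
  {G : ι → Type*} [∀ k, NormedAddCommGroup (G k)] [∀ k, NormedSpace 𝕜 (G k)]
  [NormedAddCommGroup E] [NormedSpace 𝕜 E] [NormedAddCommGroup F] [NormedSpace 𝕜 F]

theorem ContinuousLinearMap.exists_comp_eq_of_ne_zero {f : F →L[𝕜] 𝕜} (hf : f ≠ 0)
    (g : E →L[𝕜] 𝕜) : ∃ A : E →L[𝕜] F, f.comp A = g := by
  obtain ⟨v, hv⟩ : ∃ v, f v ≠ 0 := by
    by_contra! h
    exact hf (ContinuousLinearMap.ext h)
  refine ⟨g.smulRight ((f v)⁻¹ • v), ContinuousLinearMap.ext fun u => ?_⟩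
  simp [inv_mul_cancel₀ hv]

theorem fderiv_update_eq_comp_single {J : (∀ k, G k) → F} {x : ∀ k, G k}
    (hJ : DifferentiableAt 𝕜 J x) (k : ι) :
    fderiv 𝕜 (fun w => J (update x k w)) (x k) =
      (fderiv 𝕜 J x).comp (ContinuousLinearMap.single 𝕜 G k) := by
  have hJ' : HasFDerivAt J (fderiv 𝕜 J x) (update x k (x k)) := by
    rw [update_eq_self]
    exact hJ.hasFDerivAt
  refine (hJ'.comp (x k) (hasFDerivAt_update x (x k))).fderiv.trans ?_
  congr 1
  ext w k'
  rcases eq_or_ne k' k with rfl | hk' <;> simp [*]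

theorem hasFDerivAt_comp_eq_sum_fderiv_update {J : (∀ k, G k) → F} {Φ : E → ∀ k, G k}
    {B : ∀ k, E →L[𝕜] G k} {y : E} (hJ : DifferentiableAt 𝕜 J (Φ y))
    (hΦ : ∀ k, HasFDerivAt (fun z => Φ z k) (B k) y) :
    HasFDerivAt (fun z => J (Φ z))
      (∑ k, (fderiv 𝕜 (fun w => J (update (Φ y) k w)) (Φ y k)).comp (B k)) y := by
  refine (hJ.hasFDerivAt.comp y (hasFDerivAt_pi'' (Φ' := .pi B) hΦ)).congr_fderiv ?_
  ext u
  simp only [fderiv_update_eq_comp_single hJ, _root_.sum_apply, ContinuousLinearMap.comp_apply]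
  exact (ContinuousLinearMap.sum_comp_single 𝕜 G _ (ContinuousLinearMap.pi B u)).symm

theorem sum_comp_update_update_zero {H : Type*} [NormedAddCommGroup H] [NormedSpace 𝕜 H]
    (D : ∀ k, G k →L[𝕜] H) {i j : ι} (hij : i ≠ j) (a : E →L[𝕜] G i) (b : E →L[𝕜] G j) :
    ∑ k, (D k).comp (update (update (0 : ∀ k, E →L[𝕜] G k) j b) i a k) =
      (D i).comp a + (D j).comp b := by
  rw [Fintype.sum_eq_add i j hij fun k hk => by simp [hk.1, hk.2]]
  simp [hij.symm]

end Calculus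

section ConjProfile

variable {N d : ℕ} {m : Fin N → ℕ}
  {γ : (i j : Fin N) → EuclideanSpace ℝ (Fin (m i)) → EuclideanSpace ℝ (Fin d) →
    EuclideanSpace ℝ (Fin (m j))}
  {θ : (i j : Fin N) → EuclideanSpace ℝ (Fin d)} {i : Fin N}

theorem conjProfile_self (y : EuclideanSpace ℝ (Fin (m i))) : conjProfile γ θ i y i = y := by
  simp [conjProfile]

theorem conjProfile_of_ne (y : EuclideanSpace ℝ (Fin (m i))) {k : Fin N} (hk : k ≠ i) :
    conjProfile γ θ i y k = γ i k y (θ i k) := by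
  simp [conjProfile, hk]

theorem conjProfile_eq_of_consistent {x : (k : Fin N) → EuclideanSpace ℝ (Fin (m k))}
    (hcons : ∀ j, j ≠ i → γ i j (x i) (θ i j) = x j) : conjProfile γ θ i (x i) = x := by
  funext k
  by_cases hk : k = i
  · subst hk
    exact conjProfile_self _
  · rw [conjProfile_of_ne _ hk, hcons k hk]

theorem hasFDerivAt_conjProfile_apply
    {B : ∀ k, EuclideanSpace ℝ (Fin (m i)) →L[ℝ] EuclideanSpace ℝ (Fin (m k))}
    {y : EuclideanSpace ℝ (Fin (m i))}
    (hB : ∀ k, k ≠ i → HasFDerivAt (fun z => γ i k z (θ i k)) (B k) y) (k : Fin N) :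
    HasFDerivAt (fun z => conjProfile γ θ i z k)
      (update B i (ContinuousLinearMap.id ℝ _) k) y := by
  by_cases hk : k = i
  · subst hk
    simp only [conjProfile_self, update_self]
    exact hasFDerivAt_id y
  · simpa [conjProfile_of_ne _ hk, hk] using hB k hk

end ConjProfile

/-- Proposition 2 of the paper: if the conjecture class is expressive
(any target value and any target Jacobian can be matched at any point of the strategy
sets) and there is a point `xhat` where every player's partial gradient with respect to
the opponents' variables is nonzero, then the feasible set of the conjecture design
problem is nonempty: there are parameters `θ` that are first-order consistent at `xhat`
and make each conjectured objective stationary at `xhat_i`. -/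
theorem feasible_set_nonempty (N d : ℕ) (m : Fin N → ℕ)
    (X : ∀ i : Fin N, Set (EuclideanSpace ℝ (Fin (m i))))
    (Θ : Fin N → Fin N → Set (EuclideanSpace ℝ (Fin d)))
    (J : Fin N → ((k : Fin N) → EuclideanSpace ℝ (Fin (m k))) → ℝ)
    (hJ : ∀ i, ContDiff ℝ 1 (J i))
    (γ : (i j : Fin N) → EuclideanSpace ℝ (Fin (m i)) → EuclideanSpace ℝ (Fin d) →
      EuclideanSpace ℝ (Fin (m j)))
    (hγdiff : ∀ i j : Fin N, i ≠ j → ∀ θij : EuclideanSpace ℝ (Fin d),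
      Differentiable ℝ (fun y => γ i j y θij))
    -- expressivity of the conjecture class
    (hexpr : ∀ i j : Fin N, i ≠ j → ∀ xi ∈ X i, ∀ xj ∈ X j,
      ∀ α : EuclideanSpace ℝ (Fin (m i)) →L[ℝ] EuclideanSpace ℝ (Fin (m j)),
      ∃ θij ∈ Θ i j, γ i j xi θij = xj ∧ fderiv ℝ (fun y => γ i j y θij) xi = α)
    (xhat : (k : Fin N) → EuclideanSpace ℝ (Fin (m k))) (hxhat : ∀ k, xhat k ∈ X k)
    -- the partial gradient of `J i` with respect to the opponents' variables is nonzero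
    (hgrad : ∀ i : Fin N, ∃ j : Fin N, j ≠ i ∧
      fderiv ℝ (fun y : EuclideanSpace ℝ (Fin (m j)) =>
        J i (Function.update xhat j y)) (xhat j) ≠ 0) :
    ∃ θ : (i j : Fin N) → EuclideanSpace ℝ (Fin d),
      (∀ i j : Fin N, i ≠ j → θ i j ∈ Θ i j) ∧
      ∀ i : Fin N,
        (∀ j : Fin N, j ≠ i → γ i j (xhat i) (θ i j) = xhat j) ∧
        fderiv ℝ (fun y : EuclideanSpace ℝ (Fin (m i)) =>
          J i (conjProfile γ θ i y)) (xhat i) = 0 := by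
  classical
  choose jstar hjstar hpartial using hgrad
  choose A hA using fun i => ContinuousLinearMap.exists_comp_eq_of_ne_zero (hpartial i)
    (-fderiv ℝ (fun y => J i (update xhat i y)) (xhat i))
  have hθ : ∀ i j, ∃ θij, i ≠ j → θij ∈ Θ i j ∧ γ i j (xhat i) θij = xhat j ∧
      fderiv ℝ (fun y => γ i j y θij) (xhat i) =
        update (0 : ∀ k, _ →L[ℝ] EuclideanSpace ℝ (Fin (m k))) (jstar i) (A i) j := by
    intro i j
    by_cases hij : i = j
    · exact ⟨0, fun h => absurd hij h⟩
    · obtain ⟨θij, hΘ, hval, hder⟩ := hexpr i j hij _ (hxhat i) _ (hxhat j) _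
      exact ⟨θij, fun _ => ⟨hΘ, hval, hder⟩⟩
  choose θ hθ using hθ
  refine ⟨θ, fun i j hij => (hθ i j hij).1, fun i => ?_⟩
  have hcons : ∀ j, j ≠ i → γ i j (xhat i) (θ i j) = xhat j := fun j hj => (hθ i j hj.symm).2.1
  refine ⟨hcons, ?_⟩
  have hJd : DifferentiableAt ℝ (J i) (conjProfile γ θ i (xhat i)) := by
    rw [conjProfile_eq_of_consistent hcons]
    exact (hJ i).differentiable one_ne_zero xhat
  have hΦ := hasFDerivAt_conjProfile_apply (B := update 0 (jstar i) (A i)) (y := xhat i)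
    fun k hk => (hθ i k hk.symm).2.2 ▸ (hγdiff i k hk.symm _ _).hasFDerivAt
  rw [(hasFDerivAt_comp_eq_sum_fderiv_update hJd hΦ).fderiv, conjProfile_eq_of_consistent hcons,
    sum_comp_update_update_zero _ (hjstar i).symm, hA i]
  simp
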